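/- arXiv:math/0612288 — 2 statements merged into one kernel-verified Lean document; each statement's English description precedes it below -/
import Mathlib

section
/- Let A be a commutative ring with a Poisson bracket {·,·}, let w be a derivation of A that is a Poisson vector field, and let f be a unit of A. Then for every a ∈ A one has w(f⁻¹·{f, a}) − f⁻¹·{f, w(a)} = {f⁻¹·w(f), a}. In other words, the Lie bracket (commutator) of a Poisson vector field with a log-Hamiltonian vector field is the Hamiltonian vector field of the function f⁻¹·w(f). -/
/-- Let `P` be a Poisson bracket on a commutative ring `A`, let `w` be a derivation
of `A` which is a Poisson vector field, and let `f` be a unit of `A`. Then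
`w(f⁻¹·{f,a}) − f⁻¹·{f, w(a)} = {f⁻¹·w(f), a}` for all `a`; i.e. the commutator of a Poisson
vector field with a log-Hamiltonian vector field is the Hamiltonian vector field of `f⁻¹·w(f)`. -/
theorem poisson_bracket_logHamiltonian
    (A : Type*) [CommRing A] (P : A → A → A)
    (hadd₁ : ∀ a b c : A, P (a + b) c = P a c + P b c)
    (hadd₂ : ∀ a b c : A, P a (b + c) = P a b + P a c)
    (hanti : ∀ a b : A, P a b = - P b a)
    (hleib : ∀ a b c : A, P a (b * c) = P a b * c + b * P a c)
    (hjacobi : ∀ a b c : A, P a (P b c) + P b (P c a) + P c (P a b) = 0)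
    (w : A → A)
    (hwadd : ∀ a b : A, w (a + b) = w a + w b)
    (hwleib : ∀ a b : A, w (a * b) = a * w b + b * w a)
    (hwpoisson : ∀ a b : A, w (P a b) = P (w a) b + P a (w b))
    (f : Aˣ) :
    ∀ a : A, w ((↑f⁻¹ : A) * P (↑f : A) a) - (↑f⁻¹ : A) * P (↑f : A) (w a)
      = P ((↑f⁻¹ : A) * w (↑f : A)) a := by
  intro a
  have hg : (↑f⁻¹ : A) * ↑f = 1 := f.inv_mul
  -- w(1) = 0
  have w1 : w 1 = 0 := by
    have h := hwleib 1 1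
    simp only [one_mul, mul_one] at h
    linear_combination -h
  -- P x 1 = 0
  have P1 : ∀ x : A, P x 1 = 0 := by
    intro x
    have h := hleib x 1 1
    simp only [one_mul, mul_one] at h
    linear_combination -h
  -- w(f⁻¹) = -(f⁻¹ * f⁻¹ * w f)
  have hwg : w (↑f⁻¹ : A) = -((↑f⁻¹ : A) * ↑f⁻¹ * w ↑f) := by
    have h2 := hwleib (↑f⁻¹ : A) ↑f
    rw [hg, w1] at h2
    linear_combination (-(↑f⁻¹ : A)) * h2 + (-(w (↑f⁻¹ : A))) * hg
  -- P a (f⁻¹) = -(f⁻¹ * f⁻¹ * P a f)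
  have hPa : P a (↑f⁻¹ : A) = -((↑f⁻¹ : A) * ↑f⁻¹ * P a ↑f) := by
    have h3 := hleib a (↑f⁻¹ : A) ↑f
    rw [hg, P1] at h3
    linear_combination (-(↑f⁻¹ : A)) * h3 + (-(P a (↑f⁻¹ : A))) * hg
  rw [hwleib, hwpoisson, hwg, hanti ((↑f⁻¹ : A) * w ↑f) a, hleib a, hPa,
    hanti a (w ↑f), hanti a ↑f]
  ring
end

section
/- Let A be a commutative ring with a Poisson bracket {·,·} and let w be a derivation of A that is a Poisson vector field. Then there is a unique biadditive bracket B on the Laurent polynomial ring A[t,t⁻¹] satisfying B(a·tⁿ, b·tᵐ) = ({a,b} + n·(a·w(b)) − m·(b·w(a)))·t^{n+m} for all a, b ∈ A and n, m ∈ ℤ, and this bracket B is a Poisson bracket on A[t,t⁻¹]: it is antisymmetric, satisfies the Leibniz rule in each argument, and satisfies the Jacobi identity. (This is the Poisson structure π^w = π + t∂_t ∧ w on A[t,t⁻¹]; the Jacobi identity for B holds precisely because w is a Poisson vector field.) -/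
/-!
A biadditive map on `A[T;T⁻¹]` is determined by its values on the monomials `C a * T n`, and
any family of values that is biadditive in the coefficients extends to one. Every identity
required of `B` (antisymmetry, Leibniz, Jacobi) has multiadditive sides, so it suffices to check
it on monomials, where it becomes an identity in `A` for the coefficient
`twistedBracket P w n m a b` of `T (n + m)`. For the Jacobi identity the terms without `w` cancel
by the Jacobi identity of `P`, and the terms involving `w` cancel because `w` is a derivation
of both the product and the bracket.
-/

open LaurentPolynomial

namespace LaurentPolynomial

theorem C_mul_T_mul_C_mul_T {R : Type*} [CommSemiring R] (a b : R) (n m : ℤ) :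
    C a * T n * (C b * T m) = C (a * b) * T (n + m) := by
  rw [map_mul, T_add]; ring

variable {R M : Type*} [Semiring R]

theorem additive_ext [Add M] {f g : R[T;T⁻¹] → M}
    (hf : ∀ x y, f (x + y) = f x + f y) (hg : ∀ x y, g (x + y) = g x + g y)
    (h : ∀ (a : R) (n : ℤ), f (C a * T n) = g (C a * T n)) : f = g :=
  funext fun x => x.induction_on' (fun p q hp hq => by rw [hf, hg, hp, hq]) fun n a => h a n

theorem biadditive_ext [Add M] {f g : R[T;T⁻¹] → R[T;T⁻¹] → M}
    (hf₁ : ∀ x y z, f (x + y) z = f x z + f y z)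
    (hf₂ : ∀ x y z, f x (y + z) = f x y + f x z)
    (hg₁ : ∀ x y z, g (x + y) z = g x z + g y z)
    (hg₂ : ∀ x y z, g x (y + z) = g x y + g x z)
    (h : ∀ (a b : R) (n m : ℤ), f (C a * T n) (C b * T m) = g (C a * T n) (C b * T m)) :
    f = g :=
  funext fun x => additive_ext (hf₂ x) (hg₂ x) fun b m =>
    congrFun (additive_ext (f := (f · (C b * T m))) (g := (g · (C b * T m)))
      (fun x y => hf₁ x y _) (fun x y => hg₁ x y _) fun a n => h a b n m) x

theorem triadditive_ext [Add M] {f g : R[T;T⁻¹] → R[T;T⁻¹] → R[T;T⁻¹] → M}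
    (hf₁ : ∀ x y z u, f (x + y) z u = f x z u + f y z u)
    (hf₂ : ∀ x y z u, f x (y + z) u = f x y u + f x z u)
    (hf₃ : ∀ x y z u, f x y (z + u) = f x y z + f x y u)
    (hg₁ : ∀ x y z u, g (x + y) z u = g x z u + g y z u)
    (hg₂ : ∀ x y z u, g x (y + z) u = g x y u + g x z u)
    (hg₃ : ∀ x y z u, g x y (z + u) = g x y z + g x y u)
    (h : ∀ (a b c : R) (n m k : ℤ),
      f (C a * T n) (C b * T m) (C c * T k) = g (C a * T n) (C b * T m) (C c * T k)) :
    f = g :=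
  funext fun x => biadditive_ext (hf₂ x) (hf₃ x) (hg₂ x) (hg₃ x) fun b c m k =>
    congrFun (additive_ext (f := (f · (C b * T m) (C c * T k)))
      (g := (g · (C b * T m) (C c * T k))) (fun x y => hf₁ x y _ _) (fun x y => hg₁ x y _ _)
      fun a n => h a b c n m k) x

theorem existsUnique_biadditive_extension [AddCommGroup M] (φ : ℤ → ℤ → R → R → M)
    (h₁ : ∀ n m a a' b, φ n m (a + a') b = φ n m a b + φ n m a' b)
    (h₂ : ∀ n m a b b', φ n m a (b + b') = φ n m a b + φ n m a b') :
    ∃! B : R[T;T⁻¹] → R[T;T⁻¹] → M,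
      (∀ x y z, B (x + y) z = B x z + B y z) ∧ (∀ x y z, B x (y + z) = B x y + B x z) ∧
      ∀ (a b : R) (n m : ℤ), B (C a * T n) (C b * T m) = φ n m a b := by
  let Φ (n m : ℤ) : R →+ R →+ M :=
    AddMonoidHom.mk' (fun a => AddMonoidHom.mk' (φ n m a) (h₂ n m a)) fun a a' => by
      ext b; exact h₁ n m a a' b
  let Ψ : (ℤ →₀ R) →+ (ℤ →₀ R) →+ M :=
    Finsupp.liftAddHom fun n => (Finsupp.liftAddHom fun m => (Φ n m).flip).flip
  let B₀ (x y : R[T;T⁻¹]) : M := Ψ x.coeff y.coeff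
  have hB₀₁ (x y z : R[T;T⁻¹]) : B₀ (x + y) z = B₀ x z + B₀ y z := by simp [B₀]
  have hB₀₂ (x y z : R[T;T⁻¹]) : B₀ x (y + z) = B₀ x y + B₀ x z := by simp [B₀]
  have hB₀ (a b : R) (n m : ℤ) : B₀ (C a * T n) (C b * T m) = φ n m a b := by
    simp only [B₀, Ψ, Φ, ← single_eq_C_mul_T, AddMonoidAlgebra.coeff_single,
      Finsupp.liftAddHom_apply_single, AddMonoidHom.flip_apply, AddMonoidHom.mk'_apply]
  refine ⟨B₀, ⟨hB₀₁, hB₀₂, hB₀⟩, fun B ⟨hB₁, hB₂, hB⟩ => ?_⟩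
  exact biadditive_ext hB₁ hB₂ hB₀₁ hB₀₂ fun a b n m => (hB a b n m).trans (hB₀ a b n m).symm

end LaurentPolynomial

section TwistedBracket

variable {A : Type*} [CommRing A] (P : A → A → A) (w : A → A)

def twistedBracket (n m : ℤ) (a b : A) : A := P a b + n • (a * w b) - m • (b * w a)

theorem twistedBracket_add_left (hadd₁ : ∀ a b c : A, P (a + b) c = P a c + P b c)
    (hwadd : ∀ a b : A, w (a + b) = w a + w b) (n m : ℤ) (a a' b : A) :
    twistedBracket P w n m (a + a') b =
      twistedBracket P w n m a b + twistedBracket P w n m a' b := by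
  simp only [twistedBracket, hadd₁, hwadd, zsmul_eq_mul]; ring

theorem twistedBracket_add_right (hadd₂ : ∀ a b c : A, P a (b + c) = P a b + P a c)
    (hwadd : ∀ a b : A, w (a + b) = w a + w b) (n m : ℤ) (a b b' : A) :
    twistedBracket P w n m a (b + b') =
      twistedBracket P w n m a b + twistedBracket P w n m a b' := by
  simp only [twistedBracket, hadd₂, hwadd, zsmul_eq_mul]; ring

theorem twistedBracket_swap (hanti : ∀ a b : A, P a b = - P b a) (n m : ℤ) (a b : A) :
    twistedBracket P w m n b a = -twistedBracket P w n m a b := by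
  simp only [twistedBracket, zsmul_eq_mul]; linear_combination hanti b a

theorem twistedBracket_mul_right (hleib : ∀ a b c : A, P a (b * c) = P a b * c + b * P a c)
    (hwleib : ∀ a b : A, w (a * b) = a * w b + b * w a) (n m k : ℤ) (a b c : A) :
    twistedBracket P w n (m + k) a (b * c) =
      twistedBracket P w n m a b * c + b * twistedBracket P w n k a c := by
  simp only [twistedBracket, hleib, hwleib, zsmul_eq_mul]; push_cast; ring

theorem twistedBracket_jacobi
    (hadd₂ : ∀ a b c : A, P a (b + c) = P a b + P a c)
    (hanti : ∀ a b : A, P a b = - P b a)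
    (hleib : ∀ a b c : A, P a (b * c) = P a b * c + b * P a c)
    (hjacobi : ∀ a b c : A, P a (P b c) + P b (P c a) + P c (P a b) = 0)
    (hwadd : ∀ a b : A, w (a + b) = w a + w b)
    (hwleib : ∀ a b : A, w (a * b) = a * w b + b * w a)
    (hwpoisson : ∀ a b : A, w (P a b) = P (w a) b + P a (w b))
    (n m k : ℤ) (a b c : A) :
    twistedBracket P w n (m + k) a (twistedBracket P w m k b c) +
      twistedBracket P w m (k + n) b (twistedBracket P w k n c a) +
      twistedBracket P w k (n + m) c (twistedBracket P w n m a b) = 0 := by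
  let Pₐ (a : A) : A →+ A := AddMonoidHom.mk' (P a) (hadd₂ a)
  let W : A →+ A := AddMonoidHom.mk' w hwadd
  have hPsub (a x y : A) : P a (x - y) = P a x - P a y := map_sub (Pₐ a) x y
  have hPzsmul (a : A) (n : ℤ) (x : A) : P a (n • x) = n • P a x := map_zsmul (Pₐ a) n x
  have hwsub (x y : A) : w (x - y) = w x - w y := map_sub W x y
  have hwzsmul (n : ℤ) (x : A) : w (n • x) = n • w x := map_zsmul W n x
  simp only [twistedBracket, hPsub, hPzsmul, hadd₂, hleib, hwsub, hwzsmul, hwadd, hwleib,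
    hwpoisson]
  simp only [hanti b a, hanti c b, hanti a c, hanti (w c) a, hanti c (w b), hanti (w a) b,
    zsmul_eq_mul]
  push_cast
  linear_combination hjacobi a b c

end TwistedBracket

section LaurentBracket

variable {A : Type*} [CommRing A] (P : A → A → A) (w : A → A)

def IsTwistedLaurentBracket (B : A[T;T⁻¹] → A[T;T⁻¹] → A[T;T⁻¹]) : Prop :=
  (∀ x y z, B (x + y) z = B x z + B y z) ∧ (∀ x y z, B x (y + z) = B x y + B x z) ∧
    ∀ (a b : A) (n m : ℤ),
      B (C a * T n) (C b * T m) = C (twistedBracket P w n m a b) * T (n + m)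

theorem existsUnique_isTwistedLaurentBracket (hadd₁ : ∀ a b c : A, P (a + b) c = P a c + P b c)
    (hadd₂ : ∀ a b c : A, P a (b + c) = P a b + P a c)
    (hwadd : ∀ a b : A, w (a + b) = w a + w b) :
    ∃! B, IsTwistedLaurentBracket P w B :=
  existsUnique_biadditive_extension (fun n m a b => C (twistedBracket P w n m a b) * T (n + m))
    (fun n m a a' b => by rw [twistedBracket_add_left P w hadd₁ hwadd, map_add, add_mul])
    (fun n m a b b' => by rw [twistedBracket_add_right P w hadd₂ hwadd, map_add, add_mul])

namespace IsTwistedLaurentBracket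

variable {P w} {B : A[T;T⁻¹] → A[T;T⁻¹] → A[T;T⁻¹]}

theorem antisymm (hanti : ∀ a b : A, P a b = - P b a) (hB : IsTwistedLaurentBracket P w B)
    (x y : A[T;T⁻¹]) : B x y = -B y x := by
  obtain ⟨hB₁, hB₂, hB⟩ := hB
  refine congrFun₂ (biadditive_ext (g := fun x y => -B y x) hB₁ hB₂
    (fun x y z => by rw [hB₂, neg_add]) (fun x y z => by rw [hB₁, neg_add])
    fun a b n m => ?_) x y
  rw [hB, hB, add_comm m n, twistedBracket_swap P w hanti n m a b, map_neg, neg_mul, neg_neg]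

theorem leibniz (hleib : ∀ a b c : A, P a (b * c) = P a b * c + b * P a c)
    (hwleib : ∀ a b : A, w (a * b) = a * w b + b * w a) (hB : IsTwistedLaurentBracket P w B)
    (x y z : A[T;T⁻¹]) : B x (y * z) = B x y * z + y * B x z := by
  obtain ⟨hB₁, hB₂, hB⟩ := hB
  refine congrFun₃ (triadditive_ext (f := fun x y z => B x (y * z))
    (g := fun x y z => B x y * z + y * B x z)
    (fun _ _ _ _ => by simp only [hB₁]) (fun _ _ _ _ => by simp only [add_mul, hB₂])
    (fun _ _ _ _ => by simp only [mul_add, hB₂]) (fun _ _ _ _ => by simp only [hB₁]; ring)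
    (fun _ _ _ _ => by simp only [hB₂]; ring) (fun _ _ _ _ => by simp only [hB₂]; ring)
    fun a b c n m k => ?_) x y z
  simp only [C_mul_T_mul_C_mul_T, hB, twistedBracket_mul_right P w hleib hwleib, map_add, add_mul]
  rw [add_assoc, add_left_comm m n k]

theorem leibniz_left (hanti : ∀ a b : A, P a b = - P b a)
    (hleib : ∀ a b c : A, P a (b * c) = P a b * c + b * P a c)
    (hwleib : ∀ a b : A, w (a * b) = a * w b + b * w a) (hB : IsTwistedLaurentBracket P w B)
    (x y z : A[T;T⁻¹]) : B (x * y) z = x * B y z + y * B x z := by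
  have hA := hB.antisymm hanti
  linear_combination hA (x * y) z - hB.leibniz hleib hwleib z x y - y * hA z x - x * hA z y

theorem jacobi (hadd₂ : ∀ a b c : A, P a (b + c) = P a b + P a c)
    (hanti : ∀ a b : A, P a b = - P b a)
    (hleib : ∀ a b c : A, P a (b * c) = P a b * c + b * P a c)
    (hjacobi : ∀ a b c : A, P a (P b c) + P b (P c a) + P c (P a b) = 0)
    (hwadd : ∀ a b : A, w (a + b) = w a + w b)
    (hwleib : ∀ a b : A, w (a * b) = a * w b + b * w a)
    (hwpoisson : ∀ a b : A, w (P a b) = P (w a) b + P a (w b))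
    (hB : IsTwistedLaurentBracket P w B) (x y z : A[T;T⁻¹]) :
    B x (B y z) + B y (B z x) + B z (B x y) = 0 := by
  obtain ⟨hB₁, hB₂, hB⟩ := hB
  refine congrFun₃ (triadditive_ext (f := fun x y z => B x (B y z) + B y (B z x) + B z (B x y))
    (g := fun _ _ _ => 0)
    (fun _ _ _ _ => by simp only [hB₁, hB₂]; abel)
    (fun _ _ _ _ => by simp only [hB₁, hB₂]; abel)
    (fun _ _ _ _ => by simp only [hB₁, hB₂]; abel) (fun _ _ _ _ => (add_zero 0).symm)
    (fun _ _ _ _ => (add_zero 0).symm) (fun _ _ _ _ => (add_zero 0).symm)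
    fun a b c n m k => ?_) x y z
  simp only [hB]
  rw [show m + (k + n) = n + (m + k) by ring, show k + (n + m) = n + (m + k) by ring,
    ← add_mul, ← add_mul, ← map_add, ← map_add,
    twistedBracket_jacobi P w hadd₂ hanti hleib hjacobi hwadd hwleib hwpoisson, map_zero,
    zero_mul]

end IsTwistedLaurentBracket

end LaurentBracket

/-- Let `P` be a Poisson bracket on a commutative ring `A` and `w` a derivation
of `A` which is a Poisson vector field.  Then there is a unique biadditive bracket `B` on the
Laurent polynomial ring `A[t,t⁻¹]` with
`B(a·tⁿ, b·tᵐ) = ({a,b} + n·(a·w(b)) − m·(b·w(a)))·t^(n+m)`, and any such `B` is a Poisson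
bracket: antisymmetric, Leibniz in each argument, and satisfying the Jacobi identity.
(This is the Poisson structure `π^w = π + t∂ₜ ∧ w` on `A[t,t⁻¹]`.) -/
theorem laurent_poisson_structure
    (A : Type*) [CommRing A] (P : A → A → A)
    (hadd₁ : ∀ a b c : A, P (a + b) c = P a c + P b c)
    (hadd₂ : ∀ a b c : A, P a (b + c) = P a b + P a c)
    (hanti : ∀ a b : A, P a b = - P b a)
    (hleib : ∀ a b c : A, P a (b * c) = P a b * c + b * P a c)
    (hjacobi : ∀ a b c : A, P a (P b c) + P b (P c a) + P c (P a b) = 0)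
    (w : A → A)
    (hwadd : ∀ a b : A, w (a + b) = w a + w b)
    (hwleib : ∀ a b : A, w (a * b) = a * w b + b * w a)
    (hwpoisson : ∀ a b : A, w (P a b) = P (w a) b + P a (w b)) :
    (∃! B : LaurentPolynomial A → LaurentPolynomial A → LaurentPolynomial A,
      (∀ x y z : LaurentPolynomial A, B (x + y) z = B x z + B y z) ∧
      (∀ x y z : LaurentPolynomial A, B x (y + z) = B x y + B x z) ∧
      (∀ (a b : A) (n m : ℤ),
        B (LaurentPolynomial.C a * T n) (LaurentPolynomial.C b * T m) =
          LaurentPolynomial.C (P a b + n • (a * w b) - m • (b * w a)) * T (n + m))) ∧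
    (∀ B : LaurentPolynomial A → LaurentPolynomial A → LaurentPolynomial A,
      ((∀ x y z : LaurentPolynomial A, B (x + y) z = B x z + B y z) ∧
       (∀ x y z : LaurentPolynomial A, B x (y + z) = B x y + B x z) ∧
       (∀ (a b : A) (n m : ℤ),
         B (LaurentPolynomial.C a * T n) (LaurentPolynomial.C b * T m) =
           LaurentPolynomial.C (P a b + n • (a * w b) - m • (b * w a)) * T (n + m))) →
      ((∀ x y : LaurentPolynomial A, B x y = - B y x) ∧
       (∀ x y z : LaurentPolynomial A, B x (y * z) = B x y * z + y * B x z) ∧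
       (∀ x y z : LaurentPolynomial A, B (x * y) z = x * B y z + y * B x z) ∧
       (∀ x y z : LaurentPolynomial A, B x (B y z) + B y (B z x) + B z (B x y) = 0))) :=
  ⟨existsUnique_isTwistedLaurentBracket P w hadd₁ hadd₂ hwadd, fun _ hB =>
    ⟨IsTwistedLaurentBracket.antisymm hanti hB,
      IsTwistedLaurentBracket.leibniz hleib hwleib hB,
      IsTwistedLaurentBracket.leibniz_left hanti hleib hwleib hB,
      IsTwistedLaurentBracket.jacobi hadd₂ hanti hleib hjacobi hwadd hwleib hwpoisson hB⟩⟩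
end
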